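/- Let U, V be transversally intersecting subspaces of R^n (U + V = R^n) with ∠_m(U,V) > ε > 0. Then there exist γ₀ > 0 and a constant C, depending only on ε, such that for all γ < γ₀, whenever subspaces U' and V' of the same dimensions as U and V respectively satisfy ∠_M(U,U') < γ and ∠_M(V,V') < γ, then U' and V' intersect transversally and ∠_M(U∩V, U'∩V') < Cγ. -/

import Mathlib

open scoped Classical

/-! In `ℝⁿ` with the standard inner product,
`∠_M(A,B) = max_{a ∈ A, a≠0} min_{b ∈ B, b≠0} ∠(a,b)` is the maximum angle, and
for `U + V = ℝⁿ` the minimum angle is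
`∠_m(U,V) = min` over non-zero `u` in the orthogonal complement of `U ∩ V`
inside `U` of `∠(u, orthogonal complement of U ∩ V inside V)`. -/

/-- The angle `∠(u,V)` of a vector with a subspace. -/
noncomputable def angleToSub {n : ℕ} (u : EuclideanSpace ℝ (Fin n))
    (V : Submodule ℝ (EuclideanSpace ℝ (Fin n))) : ℝ :=
  sInf {θ : ℝ | ∃ v ∈ V, v ≠ 0 ∧ θ = InnerProductGeometry.angle u v}

/-- The maximum angle `∠_M(U,V)`. -/
noncomputable def maxAngle {n : ℕ}
    (U V : Submodule ℝ (EuclideanSpace ℝ (Fin n))) : ℝ :=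
  sSup {θ : ℝ | ∃ u ∈ U, u ≠ 0 ∧ θ = angleToSub u V}

/-- The minimum angle `∠_m(U,V)`. -/
noncomputable def minAngle {n : ℕ}
    (U V : Submodule ℝ (EuclideanSpace ℝ (Fin n))) : ℝ :=
  if U ⊔ V = ⊤ then
    sInf {θ : ℝ | ∃ u ∈ U ⊓ (U ⊓ V)ᗮ, u ≠ 0 ∧ θ = angleToSub u (V ⊓ (U ⊓ V)ᗮ)}
  else 0

/-!
Say that `A` is `δ`-close to `B` (`GapLE A B δ`) if every `a ∈ A` lies within `δ‖a‖` of `B`.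
A maximum angle below `γ` makes `A` `γ`-close to `B`, and
`δ`-closeness with `δ < 1` bounds the maximum angle by `πδ/2` (Jordan's inequality). For subspaces
of equal dimension closeness is symmetric up to a factor `2` once `δ ≤ 1/2`, because the orthogonal
projection `A → B` is then injective, hence onto.

Since an injective linear map on a finite-dimensional space is bounded below,
`U + V = ℝⁿ` gives `c‖x‖ ≤ ‖P_U x‖ + ‖P_V x‖`, and applied to `Uᗮ, Vᗮ` the same argument gives
`c·d(x, U ∩ V) ≤ d(x, U) + d(x, V)`. The first bound leaves no room for a vector orthogonal to
`U' + V'`; the second makes `U' ∩ V'` `O(γ)`-close to `U ∩ V`, and a dimension count makes this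
symmetric.
-/

open InnerProductGeometry Module Real

section Projection

variable {F : Type*} [NormedAddCommGroup F] [InnerProductSpace ℝ F]
  (K : Submodule ℝ F) [K.HasOrthogonalProjection]

theorem Submodule.norm_sub_starProjection_le (x : F) {v : F} (hv : v ∈ K) :
    ‖x - K.starProjection x‖ ≤ ‖x - v‖ := by
  rw [K.starProjection_minimal]
  exact ciInf_le ⟨0, Set.forall_mem_range.2 fun _ => norm_nonneg _⟩ (⟨v, hv⟩ : K)

theorem Submodule.norm_sub_starProjection_le_angle_mul_norm (x : F) {w : F} (hw : w ∈ K)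
    (hw0 : w ≠ 0) : ‖x - K.starProjection x‖ ≤ angle x w * ‖x‖ := by
  rcases eq_or_ne x 0 with rfl | hx0
  · simp
  set t := ‖x‖ / ‖w‖
  have ht : 0 < t := by positivity
  -- `‖x - t • w‖` is a chord of the arc of angle `angle x w` on the sphere of radius `‖x‖`
  have hchord : ‖x - t • w‖ ^ 2 ≤ (angle x w * ‖x‖) ^ 2 := by
    have hcos :=
      norm_sub_sq_eq_norm_sq_add_norm_sq_sub_two_mul_norm_mul_norm_mul_cos_angle x (t • w)
    have htw : ‖t • w‖ = ‖x‖ := by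
      rw [norm_smul, Real.norm_of_nonneg ht.le, div_mul_cancel₀ _ (norm_ne_zero_iff.2 hw0)]
    rw [angle_smul_right_of_pos _ _ ht, htw] at hcos
    nlinarith [one_sub_sq_div_two_le_cos (x := angle x w), sq_nonneg ‖x‖]
  calc ‖x - K.starProjection x‖ ≤ ‖x - t • w‖ := K.norm_sub_starProjection_le x (K.smul_mem t hw)
    _ ≤ angle x w * ‖x‖ := (pow_le_pow_iff_left₀ (norm_nonneg _)
        (mul_nonneg (angle_nonneg _ _) (norm_nonneg _)) two_ne_zero).1 hchord

theorem Submodule.angle_starProjection_mul_norm_le (x : F) :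
    angle x (K.starProjection x) * ‖x‖ ≤ π / 2 * ‖x - K.starProjection x‖ := by
  set p := K.starProjection x
  have horth : inner ℝ p (x - p) = 0 := by
    rw [real_inner_comm]; exact K.starProjection_inner_eq_zero x p (K.starProjection_apply_mem x)
  have hsin := sin_angle_add_mul_norm_of_inner_eq_zero horth
  have hle := angle_add_le_pi_div_two_of_inner_eq_zero horth
  rw [add_sub_cancel] at hsin hle
  rw [angle_comm] at hsin hle
  have hjordan := mul_le_sin (angle_nonneg x p) hle
  have hπ := pi_pos
  calc angle x p * ‖x‖ = π / 2 * (2 / π * angle x p) * ‖x‖ := by field_simp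
    _ ≤ π / 2 * sin (angle x p) * ‖x‖ := by gcongr
    _ = π / 2 * ‖x - p‖ := by rw [mul_assoc, hsin]

theorem Submodule.starProjection_orthogonal_apply (x : F) :
    Kᗮ.starProjection x = x - K.starProjection x := by
  simp [K.starProjection_orthogonal]

end Projection

section Gap

variable {F : Type*} [NormedAddCommGroup F] [InnerProductSpace ℝ F]

/-- Kato's one-sided gap from `A` to `B` is at most `δ`. -/
def GapLE (A B : Submodule ℝ F) [B.HasOrthogonalProjection] (δ : ℝ) : Prop :=
  ∀ a ∈ A, ‖a - B.starProjection a‖ ≤ δ * ‖a‖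

variable [FiniteDimensional ℝ F] {A B : Submodule ℝ F} {δ : ℝ}

theorem Submodule.exists_pos_mul_norm_le_norm_starProjection_add (A B : Submodule ℝ F) :
    ∃ c > 0, ∀ x ∈ A ⊔ B, c * ‖x‖ ≤ ‖A.starProjection x‖ + ‖B.starProjection x‖ := by
  let f : ↥(A ⊔ B) →ₗ[ℝ] F × F :=
    (A.starProjection.toLinearMap.prod B.starProjection.toLinearMap).comp (A ⊔ B).subtype
  have hker : LinearMap.ker f = ⊥ := by
    refine LinearMap.ker_eq_bot'.2 fun x hx => Subtype.ext ?_
    have hAB : (x : F) ∈ (A ⊔ B)ᗮ := by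
      rw [← Submodule.inf_orthogonal]
      exact ⟨(A.starProjection_apply_eq_zero_iff).1 congr($hx.1),
        (B.starProjection_apply_eq_zero_iff).1 congr($hx.2)⟩
    simpa using Submodule.inner_right_of_mem_orthogonal x.2 hAB
  obtain ⟨c, hc, hbound⟩ := antilipschitzWith_iff_exists_mul_le_norm.1
    (f.exists_antilipschitzWith hker |>.imp fun _ => And.right)
  refine ⟨c, hc, fun x hx => (hbound ⟨x, hx⟩).trans ?_⟩
  simp only [Prod.norm_def, f]
  exact max_le_add_of_nonneg (norm_nonneg _) (norm_nonneg _)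

theorem Submodule.exists_pos_mul_norm_sub_starProjection_inf_le (U V : Submodule ℝ F) :
    ∃ c > 0, ∀ x, c * ‖x - (U ⊓ V).starProjection x‖ ≤
      ‖x - U.starProjection x‖ + ‖x - V.starProjection x‖ := by
  obtain ⟨c, hc, hbound⟩ := exists_pos_mul_norm_le_norm_starProjection_add Uᗮ Vᗮ
  have hsup : (U ⊓ V)ᗮ = Uᗮ ⊔ Vᗮ := by
    rw [← Submodule.orthogonal_orthogonal (Uᗮ ⊔ Vᗮ), ← Submodule.inf_orthogonal,
      Submodule.orthogonal_orthogonal, Submodule.orthogonal_orthogonal]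
  have hproj (K : Submodule ℝ F) (hK : U ⊓ V ≤ K) (x : F) :
      Kᗮ.starProjection ((U ⊓ V)ᗮ.starProjection x) = Kᗮ.starProjection x :=
    congr($(Submodule.starProjection_comp_starProjection_of_le (Submodule.orthogonal_le hK)) x)
  refine ⟨c, hc, fun x => ?_⟩
  have := hbound _ (hsup.le ((U ⊓ V)ᗮ.starProjection_apply_mem x))
  rwa [hproj U inf_le_left, hproj V inf_le_right, Submodule.starProjection_orthogonal_apply,
    Submodule.starProjection_orthogonal_apply, Submodule.starProjection_orthogonal_apply] at this

theorem GapLE.norm_starProjection_le_of_mem_orthogonal (h : GapLE A B δ) (hδ : 0 ≤ δ) {z : F}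
    (hz : z ∈ Bᗮ) : ‖A.starProjection z‖ ≤ δ * ‖z‖ := by
  set a := A.starProjection z
  have hza : inner ℝ z a = ‖a‖ ^ 2 := by
    have := A.starProjection_inner_eq_zero z a (A.starProjection_apply_mem z)
    rw [inner_sub_left, real_inner_self_eq_norm_sq] at this
    linarith
  have hzb : inner ℝ z (B.starProjection a) = 0 := by
    rw [real_inner_comm]
    exact Submodule.inner_right_of_mem_orthogonal (B.starProjection_apply_mem a) hz
  have : ‖a‖ ^ 2 ≤ ‖z‖ * (δ * ‖a‖) := calc
    ‖a‖ ^ 2 = inner ℝ z (a - B.starProjection a) := by rw [inner_sub_right, hza, hzb, sub_zero]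
    _ ≤ ‖z‖ * ‖a - B.starProjection a‖ := real_inner_le_norm _ _
    _ ≤ ‖z‖ * (δ * ‖a‖) := by gcongr; exact h a (A.starProjection_apply_mem z)
  nlinarith [norm_nonneg a, norm_nonneg z, mul_nonneg hδ (norm_nonneg z)]

theorem GapLE.sup_eq_top {U V U' V' : Submodule ℝ F} {c γ : ℝ}
    (hc : ∀ x, c * ‖x‖ ≤ ‖U.starProjection x‖ + ‖V.starProjection x‖)
    (hU : GapLE U U' γ) (hV : GapLE V V' γ) (hγ : 0 ≤ γ) (hγc : 2 * γ < c) : U' ⊔ V' = ⊤ := by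
  refine Submodule.orthogonal_eq_bot_iff.1 (eq_bot_iff.2 fun z hz => ?_)
  rw [← Submodule.inf_orthogonal] at hz
  have := (hc z).trans (add_le_add (hU.norm_starProjection_le_of_mem_orthogonal hγ hz.1)
    (hV.norm_starProjection_le_of_mem_orthogonal hγ hz.2))
  have : ‖z‖ ≤ 0 := by nlinarith [norm_nonneg z]
  simpa using this

theorem GapLE.inf {U V U' V' : Submodule ℝ F} {c : ℝ} (hc0 : 0 < c)
    (hc : ∀ x, c * ‖x - (U ⊓ V).starProjection x‖ ≤
      ‖x - U.starProjection x‖ + ‖x - V.starProjection x‖)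
    (hU : GapLE U' U δ) (hV : GapLE V' V δ) : GapLE (U' ⊓ V') (U ⊓ V) (2 * δ / c) := by
  intro x hx
  rw [div_mul_eq_mul_div, le_div_iff₀ hc0, mul_comm]
  linarith [hc x, hU x hx.1, hV x hx.2]

theorem GapLE.symm_of_finrank_eq (h : GapLE A B δ) (hd : finrank ℝ A = finrank ℝ B) (hδ0 : 0 ≤ δ)
    (hδ : δ ≤ 1 / 2) : GapLE B A (2 * δ) := by
  let f : A →ₗ[ℝ] B := B.orthogonalProjectionOnto.toLinearMap ∘ₗ A.subtype
  have hf (a : A) : (f a : F) = B.starProjection a := rfl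
  have hinj : Function.Injective f := by
    refine LinearMap.ker_eq_bot.1 (LinearMap.ker_eq_bot'.2 fun a ha => Subtype.ext ?_)
    have := h a a.2
    rw [← hf, ha, Submodule.coe_zero, sub_zero] at this
    exact norm_le_zero_iff.1 (by nlinarith [norm_nonneg (a : F)])
  intro b hb
  obtain ⟨a, ha⟩ := (LinearMap.injective_iff_surjective_of_finrank_eq_finrank hd).1 hinj ⟨b, hb⟩
  have hab : ‖(a : F) - b‖ ≤ δ * ‖(a : F)‖ := by
    simpa [← hf, ha] using h a a.2
  have ha2 : ‖(a : F)‖ ≤ 2 * ‖b‖ := by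
    linarith [norm_le_norm_add_norm_sub' (a : F) b,
      mul_le_mul_of_nonneg_right hδ (norm_nonneg (a : F))]
  calc ‖b - A.starProjection b‖ ≤ ‖b - a‖ := A.norm_sub_starProjection_le b a.2
    _ = ‖(a : F) - b‖ := norm_sub_rev _ _
    _ ≤ 2 * δ * ‖b‖ := by nlinarith

end Gap

section Angles

variable {n : ℕ}

local notation "ℝⁿ" => EuclideanSpace ℝ (Fin n)

theorem angleToSub_le_angle (u : ℝⁿ) {K : Submodule ℝ ℝⁿ} {v : ℝⁿ} (hv : v ∈ K) (hv0 : v ≠ 0) :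
    angleToSub u K ≤ angle u v :=
  csInf_le ⟨0, fun _ ⟨_, _, _, h⟩ => h ▸ angle_nonneg _ _⟩ ⟨v, hv, hv0, rfl⟩

theorem exists_angle_lt_of_angleToSub_lt {u : ℝⁿ} {K : Submodule ℝ ℝⁿ} (hK : K ≠ ⊥) {γ : ℝ}
    (h : angleToSub u K < γ) : ∃ v ∈ K, v ≠ 0 ∧ angle u v < γ := by
  obtain ⟨v, hv, hv0⟩ := (Submodule.ne_bot_iff K).1 hK
  obtain ⟨_, ⟨w, hw, hw0, rfl⟩, hlt⟩ := exists_lt_of_csInf_lt (by exact ⟨_, v, hv, hv0, rfl⟩) h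
  exact ⟨w, hw, hw0, hlt⟩

theorem angleToSub_nonneg (u : ℝⁿ) (K : Submodule ℝ ℝⁿ) : 0 ≤ angleToSub u K :=
  Real.sInf_nonneg fun _ ⟨_, _, _, h⟩ => h ▸ angle_nonneg _ _

theorem angleToSub_le_pi (u : ℝⁿ) (K : Submodule ℝ ℝⁿ) : angleToSub u K ≤ π := by
  by_cases hK : K = ⊥
  · simp [angleToSub, hK, pi_nonneg]
  obtain ⟨v, hv, hv0⟩ := (Submodule.ne_bot_iff K).1 hK
  exact (angleToSub_le_angle u hv hv0).trans (angle_le_pi u v)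

theorem maxAngle_nonneg (U K : Submodule ℝ ℝⁿ) : 0 ≤ maxAngle U K :=
  Real.sSup_nonneg fun _ ⟨_, _, _, h⟩ => h ▸ angleToSub_nonneg _ _

theorem angleToSub_le_maxAngle {U : Submodule ℝ ℝⁿ} (K : Submodule ℝ ℝⁿ) {u : ℝⁿ} (hu : u ∈ U)
    (hu0 : u ≠ 0) : angleToSub u K ≤ maxAngle U K :=
  le_csSup ⟨π, fun _ ⟨_, _, _, h⟩ => h ▸ angleToSub_le_pi _ _⟩ ⟨u, hu, hu0, rfl⟩

theorem maxAngle_le {U K : Submodule ℝ ℝⁿ} {b : ℝ} (hb : 0 ≤ b)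
    (h : ∀ u ∈ U, u ≠ 0 → angleToSub u K ≤ b) : maxAngle U K ≤ b :=
  Real.sSup_le (fun _ ⟨u, hu, hu0, hθ⟩ => hθ ▸ h u hu hu0) hb

theorem gapLE_of_maxAngle_lt {U U' : Submodule ℝ ℝⁿ} (hd : finrank ℝ U ≤ finrank ℝ U') {γ : ℝ}
    (h : maxAngle U U' < γ) : GapLE U U' γ := by
  intro u hu
  rcases eq_or_ne u 0 with rfl | hu0
  · simp
  have hU' : U' ≠ ⊥ := by
    rintro rfl
    rw [finrank_bot, Nat.le_zero, Submodule.finrank_eq_zero] at hd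
    exact hu0 ((Submodule.mem_bot ℝ).1 (hd ▸ hu))
  obtain ⟨w, hw, hw0, hlt⟩ :=
    exists_angle_lt_of_angleToSub_lt hU' ((angleToSub_le_maxAngle U' hu hu0).trans_lt h)
  exact (U'.norm_sub_starProjection_le_angle_mul_norm u hw hw0).trans
    (mul_le_mul_of_nonneg_right hlt.le (norm_nonneg u))

theorem maxAngle_le_of_gapLE {A B : Submodule ℝ ℝⁿ} {δ : ℝ} (h : GapLE A B δ) (hδ0 : 0 ≤ δ)
    (hδ : δ < 1) : maxAngle A B ≤ π / 2 * δ := by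
  refine maxAngle_le (by positivity) fun w hw hw0 => ?_
  have hnorm : 0 < ‖w‖ := norm_pos_iff.2 hw0
  have hp0 : B.starProjection w ≠ 0 := by
    intro hp
    have := h w hw
    rw [hp, sub_zero] at this
    nlinarith
  refine (angleToSub_le_angle w (B.starProjection_apply_mem w) hp0).trans
    (le_of_mul_le_mul_right ?_ hnorm)
  calc angle w (B.starProjection w) * ‖w‖ ≤ π / 2 * ‖w - B.starProjection w‖ :=
        B.angle_starProjection_mul_norm_le w
    _ ≤ π / 2 * δ * ‖w‖ := by rw [mul_assoc]; gcongr; exact h w hw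

end Angles

theorem transverse_of_close_general {n : ℕ}
    (U V : Submodule ℝ (EuclideanSpace ℝ (Fin n)))
    (htrans : U ⊔ V = ⊤) :
    ∃ γ₀ > 0, ∃ C > 0, ∀ γ < γ₀,
      ∀ U' V' : Submodule ℝ (EuclideanSpace ℝ (Fin n)),
        Module.finrank ℝ U' = Module.finrank ℝ U →
        Module.finrank ℝ V' = Module.finrank ℝ V →
        maxAngle U U' < γ → maxAngle V V' < γ →
        U' ⊔ V' = ⊤ ∧ maxAngle (U ⊓ V) (U' ⊓ V') < C * γ := by
  obtain ⟨c₁, hc₁, hsum⟩ := U.exists_pos_mul_norm_le_norm_starProjection_add V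
  obtain ⟨c₂, hc₂, hinf⟩ := U.exists_pos_mul_norm_sub_starProjection_inf_le V
  refine ⟨min (c₁ / 2) (min (c₂ / 8) (1 / 2)), by positivity, 8 * π / c₂, by positivity,
    fun γ hγ U' V' hdU hdV hUU' hVV' => ?_⟩
  simp only [lt_min_iff] at hγ
  obtain ⟨hγc₁, hγc₂, hγ1⟩ := hγ
  have hγ0 : 0 < γ := (maxAngle_nonneg U U').trans_lt hUU'
  have hU := gapLE_of_maxAngle_lt hdU.ge hUU'
  have hV := gapLE_of_maxAngle_lt hdV.ge hVV'
  have htop : U' ⊔ V' = ⊤ :=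
    hU.sup_eq_top (fun x => hsum x (htrans ▸ Submodule.mem_top)) hV hγ0.le (by linarith)
  have hdW : finrank ℝ ↥(U ⊓ V) = finrank ℝ ↥(U' ⊓ V') := by
    have hUV := Submodule.finrank_sup_add_finrank_inf_eq U V
    have hUV' := Submodule.finrank_sup_add_finrank_inf_eq U' V'
    rw [htrans] at hUV
    rw [htop] at hUV'
    omega
  have hW' : GapLE (U' ⊓ V') (U ⊓ V) (2 * (2 * γ) / c₂) :=
    .inf hc₂ hinf (hU.symm_of_finrank_eq hdU.symm hγ0.le hγ1.le)
      (hV.symm_of_finrank_eq hdV.symm hγ0.le hγ1.le)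
  have hδ : 2 * (2 * γ) / c₂ < 1 / 2 := by rw [div_lt_iff₀ hc₂]; linarith
  have hW := hW'.symm_of_finrank_eq hdW.symm (by positivity) hδ.le
  refine ⟨htop, (maxAngle_le_of_gapLE hW (by positivity) (by linarith)).trans_lt ?_⟩
  calc π / 2 * (2 * (2 * (2 * γ) / c₂)) = 4 * π / c₂ * γ := by ring
    _ < 8 * π / c₂ * γ := by gcongr; linarith [pi_pos]

/-- Let `U, V` be transversally intersecting subspaces of `ℝⁿ`
(`U + V = ℝⁿ`) with `∠_m(U,V) > ε > 0`.  Then there exist `γ₀ > 0` and a constant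
`C > 0`, depending only on `ε`, such that for all `γ < γ₀`, whenever `U'` and `V'`
are subspaces of the same dimensions as `U` and `V` respectively with
`∠_M(U,U') < γ` and `∠_M(V,V') < γ`, then `U'` and `V'` intersect transversally and
`∠_M(U ∩ V, U' ∩ V') < Cγ`. -/
theorem transverse_of_close {n : ℕ}
    (U V : Submodule ℝ (EuclideanSpace ℝ (Fin n))) (ε : ℝ) (hε : 0 < ε)
    (htrans : U ⊔ V = ⊤) (hangle : ε < minAngle U V) :
    ∃ γ₀ > 0, ∃ C > 0, ∀ γ < γ₀,
      ∀ U' V' : Submodule ℝ (EuclideanSpace ℝ (Fin n)),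
        Module.finrank ℝ U' = Module.finrank ℝ U →
        Module.finrank ℝ V' = Module.finrank ℝ V →
        maxAngle U U' < γ → maxAngle V V' < γ →
        U' ⊔ V' = ⊤ ∧ maxAngle (U ⊓ V) (U' ⊓ V') < C * γ :=
  transverse_of_close_general U V htrans
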